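/- arXiv:2003.00787 — 2 statements merged into one kernel-verified Lean document; each statement's English description precedes it below -/
import Mathlib

section
/- For all positive integers $d_1, d_2$, the identity $\frac{2 d_1 d_2}{(d_1+d_2)^2}\binom{d_1+d_2}{d_1}^2 = \sum \frac{(a e - b c)^2}{(a+b)^2(c+e)^2}\binom{a+b}{a}^2\binom{c+e}{c}^2$ holds, where the sum runs over all pairs of nonnegative integer vectors $(a,b), (c,e) \in \mathbb{N}^2 \setminus \{(0,0)\}$ with $(a,b)+(c,e)=(d_1,d_2)$. -/
/-!
Let `c a b = (a + b).choose a` and `G = ∑ (c a b)² xᵃ yᵇ`. The key fact is `Q G² = 1` for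
`Q = (1 - x - y)² - 4xy`: both partial derivatives of `Q G²` vanish, because `G` satisfies the
first-order equations `Q ∂ₓG = (1 - x + y) G` and `Q ∂_yG = (1 + x - y) G`, which are checked
coefficientwise with Pascal's rule and `b c (a-1) b = a c a (b-1)`.

Since `a / (a + b) * c a b = c (a-1) b`, the summand of a splitting `p + q = d` is
`(c (p - e₁) c q - c p c (q - e₁))²`. With `M = ∑ c (a-1) b c a b xᵃ yᵇ`, Pascal's rule gives
`2M + 1 = (1 + x - y) G`, hence `M² + M = x G²`. Expanding the square, the sum over all
splittings is the coefficient of `x^d₁ y^d₂` in `2x G² - 2M² = 2M`, namely `2 c (d - e₁) c d`.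
The two trivial splittings contribute `c (d - e₁)²` each, and what is left is
`2 c (d - e₁) c (d - e₂) = 2 d₁ d₂ / (d₁ + d₂)² (c d)²`.
-/

open Finset

/-- `(a + b).choose a`, extended by zero off `ℕ²` so that the recurrences below hold on all of
`ℤ²` (Pascal's rule away from the origin). -/
noncomputable def pathCount (a b : ℤ) : ℚ :=
  if 0 ≤ a ∧ 0 ≤ b then ((a + b).toNat.choose a.toNat : ℚ) else 0

lemma pathCount_of_neg_left {a : ℤ} (b : ℤ) (h : a < 0) : pathCount a b = 0 := by
  simp [pathCount, h.not_ge]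

lemma pathCount_of_neg_right (a : ℤ) {b : ℤ} (h : b < 0) : pathCount a b = 0 := by
  simp [pathCount, h.not_ge]

lemma pathCount_sq_of_neg {a b : ℤ} (h : a < 0 ∨ b < 0) : pathCount a b ^ 2 = 0 := by
  rcases h with h | h
  · rw [pathCount_of_neg_left b h, zero_pow two_ne_zero]
  · rw [pathCount_of_neg_right a h, zero_pow two_ne_zero]

@[simp, norm_cast]
lemma pathCount_natCast (a b : ℕ) : pathCount a b = (a + b).choose a := by
  rw [pathCount, if_pos ⟨a.cast_nonneg, b.cast_nonneg⟩, ← Nat.cast_add, Int.toNat_natCast,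
    Int.toNat_natCast]

lemma pathCount_zero_zero : pathCount 0 0 = 1 := by
  simpa using pathCount_natCast 0 0

lemma pathCount_comm (a b : ℤ) : pathCount a b = pathCount b a := by
  rcases lt_or_ge a 0 with ha | ha
  · rw [pathCount_of_neg_left b ha, pathCount_of_neg_right b ha]
  rcases lt_or_ge b 0 with hb | hb
  · rw [pathCount_of_neg_right a hb, pathCount_of_neg_left a hb]
  lift a to ℕ using ha
  lift b to ℕ using hb
  rw [pathCount_natCast, pathCount_natCast, Nat.choose_symm_add, add_comm]

lemma pathCount_pascal {a b : ℤ} (h : a ≠ 0 ∨ b ≠ 0) :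
    pathCount a b = pathCount (a - 1) b + pathCount a (b - 1) := by
  rcases lt_or_ge a 0 with ha | ha
  · simp [pathCount_of_neg_left, ha, show a - 1 < 0 by omega]
  rcases lt_or_ge b 0 with hb | hb
  · simp [pathCount_of_neg_right, hb, show b - 1 < 0 by omega]
  lift a to ℕ using ha
  lift b to ℕ using hb
  rcases a with _ | m
  · obtain ⟨n, rfl⟩ : ∃ n, b = n + 1 := Nat.exists_eq_succ_of_ne_zero (by simpa using h)
    rw [pathCount_of_neg_left _ (show ((0 : ℕ) : ℤ) - 1 < 0 by omega), zero_add, Nat.cast_succ,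
      add_sub_cancel_right]
    norm_cast
    simp
  rcases b with _ | n
  · rw [pathCount_of_neg_right _ (show ((0 : ℕ) : ℤ) - 1 < 0 by omega), add_zero, Nat.cast_succ,
      add_sub_cancel_right]
    norm_cast
    simp
  push_cast
  simp only [add_sub_cancel_right]
  norm_cast
  rw [show m + 1 + (n + 1) = (m + n + 1) + 1 by omega, Nat.choose_succ_succ']
  congr 2; omega

lemma pathCount_exchange (a b : ℤ) :
    b * pathCount a b = (a + 1) * pathCount (a + 1) (b - 1) := by
  rcases lt_or_ge a 0 with ha | ha
  · rcases lt_or_ge a (-1) with ha' | ha'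
    · simp [pathCount_of_neg_left, ha, show a + 1 < 0 by omega]
    · simp [pathCount_of_neg_left, show a = -1 by omega]
  rcases lt_or_ge b 1 with hb | hb
  · rcases lt_or_ge b 0 with hb' | hb'
    · simp [pathCount_of_neg_right, hb', show b - 1 < 0 by omega]
    · simp [pathCount_of_neg_right, show b = 0 by omega]
  lift a to ℕ using ha
  obtain ⟨n, rfl⟩ : ∃ n : ℕ, b = n + 1 := ⟨(b - 1).toNat, by omega⟩
  simp only [add_sub_cancel_right]
  norm_cast
  rw [show a + 1 + n = a + (n + 1) by omega, mul_comm (a + 1), Nat.choose_succ_right_eq,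
    Nat.add_sub_cancel_left, mul_comm]

lemma pathCount_absorb (a b : ℤ) : a * pathCount a b = (a + b) * pathCount (a - 1) b := by
  rcases eq_or_ne a 0 with rfl | ha
  · simp [pathCount_of_neg_left]
  have := pathCount_exchange (a - 1) b
  push_cast [sub_add_cancel] at this
  rw [pathCount_pascal (Or.inl ha)]
  linear_combination -this

lemma pathCount_absorb_right (a b : ℤ) :
    b * pathCount a b = (a + b) * pathCount a (b - 1) := by
  rw [pathCount_comm, pathCount_absorb, pathCount_comm, add_comm]

lemma pathCount_sub_one_left {a b : ℕ} (h : a + b ≠ 0) :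
    pathCount (a - 1) b = a * (a + b).choose a / (a + b) := by
  have := pathCount_absorb a b
  rw [pathCount_natCast] at this
  push_cast at this
  rw [eq_div_iff (by exact_mod_cast h)]
  linear_combination -this

lemma pathCount_sub_one_right {a b : ℕ} (h : a + b ≠ 0) :
    pathCount a (b - 1) = b * (a + b).choose a / (a + b) := by
  have := pathCount_absorb_right a b
  rw [pathCount_natCast] at this
  push_cast at this
  rw [eq_div_iff (by exact_mod_cast h)]
  linear_combination -this

/-- Coefficientwise, `quadric * ∂ₓ binomSqSeries = (1 - x + y) * binomSqSeries`. -/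
lemma pathCount_sq_ode (a b : ℤ) :
    (a + 1) * pathCount (a + 1) b ^ 2 - 2 * a * pathCount a b ^ 2
      - 2 * (a + 1) * pathCount (a + 1) (b - 1) ^ 2 + (a - 1) * pathCount (a - 1) b ^ 2
      - 2 * a * pathCount a (b - 1) ^ 2 + (a + 1) * pathCount (a + 1) (b - 2) ^ 2
      = pathCount a b ^ 2 - pathCount (a - 1) b ^ 2 + pathCount a (b - 1) ^ 2 := by
  by_cases hex : (a = -1 ∧ b = 0) ∨ (a = 0 ∧ b = 0) ∨ (a = -1 ∧ b = 1)
  · have h₁₀ : pathCount 1 0 = 1 := by simpa using pathCount_natCast 1 0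
    rcases hex with ⟨rfl, rfl⟩ | ⟨rfl, rfl⟩ | ⟨rfl, rfl⟩ <;>
      norm_num [pathCount_of_neg_left, pathCount_of_neg_right, pathCount_zero_zero, h₁₀]
  have e₁ := pathCount_exchange (a - 1) b
  have e₂ := pathCount_exchange a (b - 1)
  rw [sub_add_cancel] at e₁
  rw [show b - 1 - 1 = b - 2 by ring] at e₂
  -- Pascal's rule expresses everything through the three values on the line `a + b - 2`.
  rw [pathCount_pascal (a := a + 1) (b := b) (by omega), add_sub_cancel_right,
    pathCount_pascal (a := a) (b := b) (by omega),
    pathCount_pascal (a := a + 1) (b := b - 1) (by omega), add_sub_cancel_right,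
    show b - 1 - 1 = b - 2 by ring]
  push_cast at e₁ e₂
  linear_combination (2 * pathCount a (b - 1)) * e₁ - 2 * pathCount (a - 1) b * e₂

section Series

open MvPowerSeries

/-- The series `∑ f a b xᵃ yᵇ` with `x = X 0`, `y = X 1`; the values of `f` off `ℕ²` are
ignored. -/
noncomputable def bivarSeries (f : ℤ → ℤ → ℚ) : MvPowerSeries (Fin 2) ℚ :=
  fun e => f (e 0) (e 1)

@[simp]
lemma coeff_bivarSeries (f : ℤ → ℤ → ℚ) (e : Fin 2 →₀ ℕ) :
    coeff e (bivarSeries f) = f (e 0) (e 1) := rfl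

lemma coeff_single_add_single_bivarSeries (f : ℤ → ℤ → ℚ) (d₁ d₂ : ℕ) :
    coeff (Finsupp.single 0 d₁ + Finsupp.single 1 d₂) (bivarSeries f) = f d₁ d₂ := by
  simp

lemma constantCoeff_bivarSeries (f : ℤ → ℤ → ℚ) : constantCoeff (bivarSeries f) = f 0 0 := by
  rw [← coeff_zero_eq_constantCoeff_apply, coeff_bivarSeries]
  simp

lemma X_zero_mul_bivarSeries {f : ℤ → ℤ → ℚ} (hf : ∀ a b, a < 0 ∨ b < 0 → f a b = 0) :
    X 0 * bivarSeries f = bivarSeries fun a b => f (a - 1) b := by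
  ext e
  rw [X, coeff_monomial_mul, coeff_bivarSeries, coeff_bivarSeries]
  split_ifs with h <;> rw [Finsupp.single_le_iff] at h
  · simp [Nat.cast_sub h]
  · exact (hf _ _ (by omega)).symm

lemma X_one_mul_bivarSeries {f : ℤ → ℤ → ℚ} (hf : ∀ a b, a < 0 ∨ b < 0 → f a b = 0) :
    X 1 * bivarSeries f = bivarSeries fun a b => f a (b - 1) := by
  ext e
  rw [X, coeff_monomial_mul, coeff_bivarSeries, coeff_bivarSeries]
  split_ifs with h <;> rw [Finsupp.single_le_iff] at h
  · simp [Nat.cast_sub h]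
  · exact (hf _ _ (by omega)).symm

lemma pderiv_zero_bivarSeries (f : ℤ → ℤ → ℚ) :
    pderiv ℚ 0 (bivarSeries f) = bivarSeries fun a b => f (a + 1) b * (a + 1) := by
  ext e
  simp [coeff_pderiv]

lemma pderiv_one_bivarSeries (f : ℤ → ℤ → ℚ) :
    pderiv ℚ 1 (bivarSeries f) = bivarSeries fun a b => f a (b + 1) * (b + 1) := by
  ext e
  simp [coeff_pderiv]

lemma single_add_single_apply_zero (a b : ℕ) :
    (Finsupp.single 0 a + Finsupp.single 1 b : Fin 2 →₀ ℕ) 0 = a := by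
  simp

lemma single_add_single_apply_one (a b : ℕ) :
    (Finsupp.single 0 a + Finsupp.single 1 b : Fin 2 →₀ ℕ) 1 = b := by
  simp

lemma apply_of_mem_antidiagonal_single_add_single {d₁ d₂ : ℕ}
    {q : (Fin 2 →₀ ℕ) × (Fin 2 →₀ ℕ)}
    (hq : q ∈ antidiagonal (Finsupp.single 0 d₁ + Finsupp.single 1 d₂)) :
    q.1 0 + q.2 0 = d₁ ∧ q.1 1 + q.2 1 = d₂ := by
  rw [HasAntidiagonal.mem_antidiagonal] at hq
  exact ⟨by rw [← Finsupp.add_apply, hq, single_add_single_apply_zero],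
    by rw [← Finsupp.add_apply, hq, single_add_single_apply_one]⟩

lemma coeff_bivarSeries_mul (f g : ℤ → ℤ → ℚ) (d₁ d₂ : ℕ) :
    coeff (Finsupp.single 0 d₁ + Finsupp.single 1 d₂) (bivarSeries f * bivarSeries g) =
      ∑ p ∈ range (d₁ + 1) ×ˢ range (d₂ + 1),
        f p.1 p.2 * g (d₁ - p.1 : ℕ) (d₂ - p.2 : ℕ) := by
  classical
  rw [coeff_mul]
  refine sum_nbij' (fun q => (q.1 0, q.1 1))
    (fun p => (Finsupp.single 0 p.1 + Finsupp.single 1 p.2,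
      Finsupp.single 0 (d₁ - p.1) + Finsupp.single 1 (d₂ - p.2))) ?_ ?_ ?_ ?_ ?_
  · intro q hq
    have := apply_of_mem_antidiagonal_single_add_single hq
    rw [mem_product, mem_range, mem_range]
    omega
  · intro p hp
    rw [mem_product, mem_range, mem_range] at hp
    rw [HasAntidiagonal.mem_antidiagonal]
    refine Finsupp.ext (Fin.forall_fin_two.mpr ⟨?_, ?_⟩)
    · rw [Finsupp.add_apply, single_add_single_apply_zero, single_add_single_apply_zero,
        single_add_single_apply_zero]
      omega
    · rw [Finsupp.add_apply, single_add_single_apply_one, single_add_single_apply_one,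
        single_add_single_apply_one]
      omega
  · intro q hq
    have := apply_of_mem_antidiagonal_single_add_single hq
    refine Prod.ext ?_ ?_ <;> refine Finsupp.ext (Fin.forall_fin_two.mpr ⟨?_, ?_⟩) <;>
      simp only [single_add_single_apply_zero, single_add_single_apply_one] <;> omega
  · intro p _
    simp
  · intro q hq
    have := apply_of_mem_antidiagonal_single_add_single hq
    simp only [coeff_bivarSeries]
    congr <;> omega

noncomputable def quadric : MvPowerSeries (Fin 2) ℚ := (1 - X 0 - X 1) ^ 2 - 4 * X 0 * X 1

lemma pderiv_zero_quadric : pderiv ℚ 0 quadric = -2 * (1 - X 0 + X 1) := by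
  rw [quadric, ← map_ofNat C 4]
  simp only [map_sub, Derivation.leibniz, Derivation.leibniz_pow, pderiv_C, pderiv_X_self,
    pderiv_X_of_ne (show (1 : Fin 2) ≠ 0 by decide), Derivation.map_one_eq_zero, smul_eq_mul]
  rw [map_ofNat]
  ring

lemma pderiv_one_quadric : pderiv ℚ 1 quadric = -2 * (1 + X 0 - X 1) := by
  rw [quadric, ← map_ofNat C 4]
  simp only [map_sub, Derivation.leibniz, Derivation.leibniz_pow, pderiv_C, pderiv_X_self,
    pderiv_X_of_ne (show (0 : Fin 2) ≠ 1 by decide), Derivation.map_one_eq_zero, smul_eq_mul]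
  rw [map_ofNat]
  ring

lemma quadric_mul_bivarSeries {f : ℤ → ℤ → ℚ} (hf : ∀ a b, a < 0 ∨ b < 0 → f a b = 0) :
    quadric * bivarSeries f = bivarSeries fun a b =>
      f a b - 2 * f (a - 1) b - 2 * f a (b - 1) + f (a - 2) b - 2 * f (a - 1) (b - 1)
        + f a (b - 2) := by
  have hf₀ : ∀ a b, a < 0 ∨ b < 0 → f (a - 1) b = 0 := fun a b h => hf _ _ (by omega)
  have hf₁ : ∀ a b, a < 0 ∨ b < 0 → f a (b - 1) = 0 := fun a b h => hf _ _ (by omega)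
  have expand : quadric * bivarSeries f =
      bivarSeries f - (X 0 * bivarSeries f + X 0 * bivarSeries f)
        - (X 1 * bivarSeries f + X 1 * bivarSeries f) + X 0 * (X 0 * bivarSeries f)
        - (X 0 * (X 1 * bivarSeries f) + X 0 * (X 1 * bivarSeries f))
        + X 1 * (X 1 * bivarSeries f) := by
    rw [quadric]
    ring
  rw [expand, X_zero_mul_bivarSeries hf, X_one_mul_bivarSeries hf, X_zero_mul_bivarSeries hf₀,
    X_zero_mul_bivarSeries hf₁, X_one_mul_bivarSeries hf₁]
  ext e
  simp only [map_add, map_sub, coeff_bivarSeries]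
  ring_nf

noncomputable def binomSqSeries : MvPowerSeries (Fin 2) ℚ :=
  bivarSeries fun a b => pathCount a b ^ 2

lemma quadric_mul_pderiv_zero_binomSqSeries :
    quadric * pderiv ℚ 0 binomSqSeries = (1 - X 0 + X 1) * binomSqSeries := by
  have expand : (1 - X 0 + X 1) * binomSqSeries =
      binomSqSeries - X 0 * binomSqSeries + X 1 * binomSqSeries := by ring
  rw [expand, binomSqSeries, pderiv_zero_bivarSeries, quadric_mul_bivarSeries,
    X_zero_mul_bivarSeries fun _ _ => pathCount_sq_of_neg,
    X_one_mul_bivarSeries fun _ _ => pathCount_sq_of_neg]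
  · ext e
    have := pathCount_sq_ode (e 0) (e 1)
    simp only [map_add, map_sub, coeff_bivarSeries]
    push_cast [sub_add_cancel, show ((e 0 : ℤ) - 2 + 1) = (e 0 : ℤ) - 1 by ring] at this ⊢
    linear_combination this
  · intro a b h
    rcases eq_or_ne a (-1) with rfl | ha
    · simp
    · rw [pathCount_sq_of_neg (by omega), zero_mul]

lemma quadric_mul_pderiv_one_binomSqSeries :
    quadric * pderiv ℚ 1 binomSqSeries = (1 + X 0 - X 1) * binomSqSeries := by
  have expand : (1 + X 0 - X 1) * binomSqSeries =
      binomSqSeries + X 0 * binomSqSeries - X 1 * binomSqSeries := by ring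
  rw [expand, binomSqSeries, pderiv_one_bivarSeries, quadric_mul_bivarSeries,
    X_zero_mul_bivarSeries fun _ _ => pathCount_sq_of_neg,
    X_one_mul_bivarSeries fun _ _ => pathCount_sq_of_neg]
  · ext e
    have := pathCount_sq_ode (e 1) (e 0)
    simp only [pathCount_comm (e 1 + 1 : ℤ), pathCount_comm (e 1 : ℤ),
      pathCount_comm (e 1 - 1 : ℤ)] at this
    simp only [map_add, map_sub, coeff_bivarSeries]
    push_cast [sub_add_cancel, show ((e 1 : ℤ) - 2 + 1) = (e 1 : ℤ) - 1 by ring] at this ⊢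
    linear_combination this
  · intro a b h
    rcases eq_or_ne b (-1) with rfl | hb
    · simp
    · rw [pathCount_sq_of_neg (by omega), zero_mul]

theorem quadric_mul_binomSqSeries_sq : quadric * binomSqSeries ^ 2 = 1 := by
  apply pderiv.ext
  · refine Fin.forall_fin_two.mpr ⟨?_, ?_⟩
    · simp only [Derivation.leibniz, Derivation.leibniz_pow, pderiv_zero_quadric, smul_eq_mul,
        Derivation.map_one_eq_zero]
      linear_combination (2 * binomSqSeries) * quadric_mul_pderiv_zero_binomSqSeries
    · simp only [Derivation.leibniz, Derivation.leibniz_pow, pderiv_one_quadric, smul_eq_mul,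
        Derivation.map_one_eq_zero]
      linear_combination (2 * binomSqSeries) * quadric_mul_pderiv_one_binomSqSeries
  · simp [quadric, binomSqSeries, constantCoeff_bivarSeries, pathCount_zero_zero]

noncomputable def mixedSeries : MvPowerSeries (Fin 2) ℚ :=
  bivarSeries fun a b => pathCount (a - 1) b * pathCount a b

lemma mixedSeries_add_mixedSeries_add_one :
    mixedSeries + mixedSeries + 1 = (1 + X 0 - X 1) * binomSqSeries := by
  have expand : (1 + X 0 - X 1) * binomSqSeries =
      binomSqSeries + X 0 * binomSqSeries - X 1 * binomSqSeries := by ring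
  rw [expand, binomSqSeries, X_zero_mul_bivarSeries fun _ _ => pathCount_sq_of_neg,
    X_one_mul_bivarSeries fun _ _ => pathCount_sq_of_neg]
  ext e
  simp only [mixedSeries, map_add, map_sub, coeff_bivarSeries, coeff_one]
  split_ifs with he
  · simp [he, pathCount_of_neg_left, pathCount_of_neg_right, pathCount_zero_zero]
  · have hne : (e 0 : ℤ) ≠ 0 ∨ (e 1 : ℤ) ≠ 0 := by
      by_contra! h
      exact he (Finsupp.ext (Fin.forall_fin_two.mpr (by simpa using h)))
    rw [pathCount_pascal hne]
    ring

theorem mixedSeries_mul_self_add_mixedSeries :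
    mixedSeries * mixedSeries + mixedSeries = X 0 * binomSqSeries ^ 2 := by
  have h₄ : (4 : MvPowerSeries (Fin 2) ℚ) ≠ 0 := fun h => by
    simpa [map_ofNat] using congrArg constantCoeff h
  refine mul_left_cancel₀ h₄ ?_
  have hQ := quadric_mul_binomSqSeries_sq
  rw [quadric] at hQ
  -- `(2M + 1)² = (1 + x - y)² G² = (Q + 4x) G²`
  linear_combination (mixedSeries + mixedSeries + 1 + (1 + X 0 - X 1) * binomSqSeries) *
    mixedSeries_add_mixedSeries_add_one + hQ

theorem sum_sq_pathCount_cross (d₁ d₂ : ℕ) :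
    ∑ p ∈ range (d₁ + 1) ×ˢ range (d₂ + 1),
      (pathCount (p.1 - 1) p.2 * pathCount (d₁ - p.1 : ℕ) (d₂ - p.2 : ℕ)
        - pathCount p.1 p.2 * pathCount ((d₁ - p.1 : ℕ) - 1) (d₂ - p.2 : ℕ)) ^ 2
      = 2 * (pathCount (d₁ - 1) d₂ * pathCount d₁ d₂) := by
  have hXG : X 0 * binomSqSeries = bivarSeries fun a b => pathCount (a - 1) b ^ 2 :=
    X_zero_mul_bivarSeries fun _ _ => pathCount_sq_of_neg
  have key : (X 0 * binomSqSeries) * binomSqSeries + binomSqSeries * (X 0 * binomSqSeries)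
      - (mixedSeries * mixedSeries + mixedSeries * mixedSeries) = mixedSeries + mixedSeries := by
    linear_combination -2 * mixedSeries_mul_self_add_mixedSeries
  have hcoeff := congrArg (coeff (Finsupp.single 0 d₁ + Finsupp.single 1 d₂)) key
  rw [hXG, binomSqSeries, mixedSeries] at hcoeff
  simp only [map_add, map_sub, coeff_bivarSeries_mul, coeff_single_add_single_bivarSeries,
    ← sum_add_distrib, ← sum_sub_distrib] at hcoeff
  rw [two_mul, ← hcoeff]
  exact sum_congr rfl fun p _ => by ring

end Series

lemma summand_eq_sq_pathCount_cross {a b c e : ℕ} (hab : a + b ≠ 0) (hce : c + e ≠ 0) :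
    ((a : ℚ) * e - b * c) ^ 2 / (((a + b : ℕ) : ℚ) ^ 2 * ((c + e : ℕ) : ℚ) ^ 2) *
        ((a + b).choose a : ℚ) ^ 2 * ((c + e).choose c : ℚ) ^ 2
      = (pathCount (a - 1) b * pathCount c e - pathCount a b * pathCount (c - 1) e) ^ 2 := by
  have hab' : (a + b : ℚ) ≠ 0 := by exact_mod_cast hab
  have hce' : (c + e : ℚ) ≠ 0 := by exact_mod_cast hce
  rw [pathCount_sub_one_left hab, pathCount_sub_one_left hce, pathCount_natCast,
    pathCount_natCast]
  push_cast
  field_simp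
  ring

lemma two_mul_mul_div_sq_mul_choose_sq (d₁ d₂ : ℕ) :
    (2 * d₁ * d₂ : ℚ) / ((d₁ + d₂ : ℚ) ^ 2) * ((d₁ + d₂).choose d₁ : ℚ) ^ 2
      = 2 * (pathCount (d₁ - 1) d₂ * pathCount d₁ (d₂ - 1)) := by
  rcases eq_or_ne (d₁ + d₂) 0 with h | h
  · simp [show d₁ = 0 by omega, show d₂ = 0 by omega, pathCount_of_neg_left]
  rw [pathCount_sub_one_left h, pathCount_sub_one_right h]
  have h' : (d₁ + d₂ : ℚ) ≠ 0 := by exact_mod_cast h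
  field_simp

theorem stmt_0_general (d₁ d₂ : ℕ) (h₁ : 0 < d₁) :
    (2 * d₁ * d₂ : ℚ) / ((d₁ + d₂ : ℚ) ^ 2) * ((d₁ + d₂).choose d₁ : ℚ) ^ 2 =
      ∑ p ∈ (Finset.range (d₁ + 1) ×ˢ Finset.range (d₂ + 1)).filter
          (fun p => p ≠ (0, 0) ∧ p ≠ (d₁, d₂)),
        ((p.1 : ℚ) * ((d₂ - p.2 : ℕ) : ℚ) - (p.2 : ℚ) * ((d₁ - p.1 : ℕ) : ℚ)) ^ 2 /
            (((p.1 + p.2 : ℕ) : ℚ) ^ 2 * (((d₁ - p.1) + (d₂ - p.2) : ℕ) : ℚ) ^ 2) *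
          ((p.1 + p.2).choose p.1 : ℚ) ^ 2 *
          (((d₁ - p.1) + (d₂ - p.2)).choose (d₁ - p.1) : ℚ) ^ 2 := by
  set R := range (d₁ + 1) ×ˢ range (d₂ + 1)
  have hd : (d₁, d₂) ∈ R := by simp [R]
  have h₀ : ((0 : ℕ), (0 : ℕ)) ∈ R.erase (d₁, d₂) :=
    mem_erase.mpr ⟨fun h => h₁.ne (congrArg Prod.fst h), by simp [R]⟩
  have hfilter : R.filter (fun p => p ≠ (0, 0) ∧ p ≠ (d₁, d₂)) =
      (R.erase (d₁, d₂)).erase (0, 0) := by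
    ext p
    simp only [mem_filter, mem_erase]
    tauto
  have hne : ∀ p ∈ (R.erase (d₁, d₂)).erase (0, 0),
      p.1 + p.2 ≠ 0 ∧ d₁ - p.1 + (d₂ - p.2) ≠ 0 := by
    intro p hp
    simp only [mem_erase, R, mem_product, mem_range, ne_eq, Prod.ext_iff] at hp
    omega
  have hsum := sum_sq_pathCount_cross d₁ d₂
  rw [← add_sum_erase R _ hd, ← add_sum_erase _ _ h₀] at hsum
  simp only [Nat.sub_self, Nat.sub_zero, Nat.cast_zero, zero_sub,
    pathCount_of_neg_left _ neg_one_lt_zero, pathCount_zero_zero, zero_mul, mul_one, one_mul,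
    neg_sq] at hsum
  rw [two_mul_mul_div_sq_mul_choose_sq, hfilter,
    sum_congr rfl fun p hp => summand_eq_sq_pathCount_cross (hne p hp).1 (hne p hp).2]
  linear_combination
    -hsum - 2 * pathCount (d₁ - 1) d₂ * pathCount_pascal (a := d₁) (b := d₂) (by omega)

/-- WDVV-derived binomial identity for local `ℙ¹ × ℙ¹`. -/
theorem stmt_0 (d₁ d₂ : ℕ) (h₁ : 0 < d₁) (h₂ : 0 < d₂) :
    (2 * d₁ * d₂ : ℚ) / ((d₁ + d₂ : ℚ) ^ 2) * ((d₁ + d₂).choose d₁ : ℚ) ^ 2 =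
      ∑ p ∈ (Finset.range (d₁ + 1) ×ˢ Finset.range (d₂ + 1)).filter
          (fun p => p ≠ (0, 0) ∧ p ≠ (d₁, d₂)),
        ((p.1 : ℚ) * ((d₂ - p.2 : ℕ) : ℚ) - (p.2 : ℚ) * ((d₁ - p.1 : ℕ) : ℚ)) ^ 2 /
            (((p.1 + p.2 : ℕ) : ℚ) ^ 2 * (((d₁ - p.1) + (d₂ - p.2) : ℕ) : ℚ) ^ 2) *
          ((p.1 + p.2).choose p.1 : ℚ) ^ 2 *
          (((d₁ - p.1) + (d₂ - p.2)).choose (d₁ - p.1) : ℚ) ^ 2 :=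
  stmt_0_general d₁ d₂ h₁
end

section
/- Let $c$ be an integer and let $m \colon \mathbb{Z}_{>0} \times \mathbb{Z}_{>0} \to \mathbb{Z}$ be a symmetric function satisfying: (i) $m(a,b) = m(a-b, b)$ whenever $a > b$, and (ii) $m(r,r) = c\, r - \sum_{r'=1}^{r-1} m(r', r - r')$ for every $r \geq 1$. Then $m(a,b) = c$ for all positive integers $a, b$. -/
open Finset

/-! Strong induction on `a + b`: off the diagonal, the subtraction rule (after a swap if
`a < b`) lowers `a + b`; on the diagonal, each of the `r - 1` terms of the sum already
equals `c`, leaving `m r r = c * r - (r - 1) * c = c`. -/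

lemma diag_eq_of_forall_antidiagonal_eq {c : ℤ} {m : ℕ → ℕ → ℤ} {r : ℕ} (hr : 1 ≤ r)
    (hdiag : m r r = c * r - ∑ r' ∈ Ico 1 r, m r' (r - r'))
    (hoff : ∀ r' ∈ Ico 1 r, m r' (r - r') = c) :
    m r r = c := by
  rw [hdiag, sum_congr rfl hoff, sum_const, Nat.card_Ico, nsmul_eq_mul, Nat.cast_sub hr]
  ring

/-- Abstract meeting-invariant recursion: a symmetric function satisfying the
subtraction rule and the diagonal recursion is constant. -/
theorem stmt_3 (c : ℤ) (m : ℕ → ℕ → ℤ)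
    (hsymm : ∀ a b : ℕ, 0 < a → 0 < b → m a b = m b a)
    (hsub : ∀ a b : ℕ, 0 < b → b < a → m a b = m (a - b) b)
    (hdiag : ∀ r : ℕ, 1 ≤ r →
      m r r = c * r - ∑ r' ∈ Finset.Ico 1 r, m r' (r - r')) :
    ∀ a b : ℕ, 0 < a → 0 < b → m a b = c := by
  intro a b
  induction hn : a + b using Nat.strong_induction_on generalizing a b with
  | _ n ih =>
  intro ha hb
  rcases lt_trichotomy a b with hab | rfl | hab
  · rw [hsymm a b ha hb, hsub b a ha hab]
    exact ih _ (by omega) _ _ rfl (by omega) ha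
  · refine diag_eq_of_forall_antidiagonal_eq ha (hdiag a ha) fun r' hr' => ?_
    rw [mem_Ico] at hr'
    exact ih _ (by omega) _ _ rfl (by omega) (by omega)
  · rw [hsub a b hb hab]
    exact ih _ (by omega) _ _ rfl (by omega) hb
end
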